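/- arXiv:alg-geom/9711004 — 3 statements merged into one kernel-verified Lean document; each statement's English description precedes it below -/
import Mathlib

section
/- Let $K$ be a field, $I \subseteq K[x_1,\dots,x_n]$ an ideal vanishing at $0$, and $v \in K^n$ with $l_f(v) = 0$ and, whenever $l_f = 0$, also $q_f(v) = 0$, for all $f \in I$. Then there exists $\gamma \in K^n$, either zero or linearly independent of $v$, such that for every $f \in I$, the power series $f(tv + t^2\gamma) \in K[[t]]$ has vanishing coefficients in degrees $0$, $1$, and $2$. -/
/-!
Substituting `x = t v + t² γ`, the coefficients of `t⁰, t¹, t²` in `f(x)` are `f(0)`, `l_f(v)` and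
`l_f(γ) + q_f(v)`, where `l_f`, `q_f` are the homogeneous components of degree `1` and `2`. The
first two vanish by hypothesis. For the third, the hypothesis on `q_f` says that the functional
`f ↦ -q_f(v)` on `I` vanishes on the kernel of `f ↦ l_f`, so it factors through `l_f` and extends
to a functional on all polynomials; on linear forms such a functional is evaluation at a point
`γ`. If this `γ` is dependent on `v`, then `q_f(v) = 0` on `I` (as `v = 0` or `l_f(γ) = 0`), and
`γ = 0` works instead.
-/

open MvPolynomial

theorem LinearMap.exists_comp_eq_of_ker_le {K V W : Type*} [Field K] [AddCommGroup V] [Module K V]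
    [AddCommGroup W] [Module K W] (f : V →ₗ[K] W) (g : Module.Dual K V)
    (h : LinearMap.ker f ≤ LinearMap.ker g) : ∃ G : Module.Dual K W, G ∘ₗ f = g := by
  obtain ⟨G, hG⟩ : g ∈ LinearMap.range f.dualMap := by
    rw [LinearMap.range_dualMap_eq_dualAnnihilator_ker, Submodule.mem_dualAnnihilator]
    exact fun x hx => h hx
  exact ⟨G, hG⟩

namespace MvPolynomial

variable {σ R : Type*} [CommSemiring R]

theorem IsHomogeneous.eval_smul {p : MvPolynomial σ R} {m : ℕ} (hp : p.IsHomogeneous m)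
    (c : R) (x : σ → R) : eval (c • x) p = c ^ m * eval x p := by
  simp only [eval_eq, Finset.mul_sum]
  refine Finset.sum_congr rfl fun d hd => ?_
  have hdeg : d.degree = m := by
    rw [Finsupp.degree_eq_weight_one]; exact hp (mem_support_iff.mp hd)
  simp only [Pi.smul_apply, smul_eq_mul, mul_pow, Finset.prod_mul_distrib,
    Finset.prod_pow_eq_pow_sum, ← Finsupp.degree_apply, hdeg]
  ring

theorem IsHomogeneous.eval_zero_eq_zero {p : MvPolynomial σ R} {m : ℕ} (hp : p.IsHomogeneous m)
    (hm : m ≠ 0) : eval 0 p = 0 := by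
  simpa [zero_pow hm] using hp.eval_smul 0 0

theorem IsHomogeneous.linearMap_apply_eq_eval {p : MvPolynomial σ R} (hp : p.IsHomogeneous 1)
    (G : MvPolynomial σ R →ₗ[R] R) : G p = eval (fun i => G (X i)) p := by
  replace hp : p ∈ Submodule.span R (Set.range X) := by
    rw [← homogeneousSubmodule_one_eq_span_X]; exact hp
  induction hp using Submodule.span_induction with
  | mem q hq => obtain ⟨i, rfl⟩ := hq; simp
  | zero => simp
  | add q r _ _ hq hr => simp [hq, hr]
  | smul c q _ hq => simp [hq]

theorem IsHomogeneous.coeff_aeval {p : MvPolynomial σ R} (hp : p.IsHomogeneous 1)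
    (w : σ → Polynomial R) (k : ℕ) :
    (MvPolynomial.aeval w p).coeff k = eval (fun i => (w i).coeff k) p := by
  simpa using
    hp.linearMap_apply_eq_eval ((Polynomial.lcoeff R k).comp (MvPolynomial.aeval w).toLinearMap)

theorem coeff_zero_aeval (w : σ → Polynomial R) (p : MvPolynomial σ R) :
    (aeval w p).coeff 0 = eval (fun i => (w i).coeff 0) p := by
  rw [Polynomial.coeff_zero_eq_eval_zero, aeval_def, ← Polynomial.coe_evalRingHom, eval₂_comp_left]
  congr 1
  · ext; simp
  · ext; simp [Polynomial.coeff_zero_eq_eval_zero]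

theorem aeval_X_mul_monomial (w : σ → Polynomial R) (d : σ →₀ ℕ) (c : R) :
    aeval (fun i => Polynomial.X * w i) (monomial d c) =
      Polynomial.X ^ d.degree * aeval w (monomial d c) := by
  rw [aeval_monomial, aeval_monomial]
  simp only [mul_pow, Finsupp.prod, Finset.prod_mul_distrib, Finset.prod_pow_eq_pow_sum,
    Finsupp.degree_apply]
  ring

theorem coeff_aeval_X_mul (w : σ → Polynomial R) (f : MvPolynomial σ R) (k : ℕ) :
    (aeval (fun i => Polynomial.X * w i) f).coeff k =
      ∑ m ∈ Finset.range (k + 1), (aeval w (homogeneousComponent m f)).coeff (k - m) := by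
  induction f using MvPolynomial.induction_on' with
  | monomial d c =>
    simp only [aeval_X_mul_monomial, Polynomial.coeff_X_pow_mul',
      homogeneousComponent_of_mem (isHomogeneous_monomial c rfl)]
    split_ifs with hk
    · rw [Finset.sum_eq_single_of_mem d.degree (by simpa [Nat.lt_succ_iff])
        (fun m _ hm => by simp [hm]), if_pos rfl]
    · refine (Finset.sum_eq_zero fun m hm => ?_).symm
      rw [if_neg (by simp at hm; omega), map_zero, Polynomial.coeff_zero]
  | add p q hp hq => simp [hp, hq, Finset.sum_add_distrib]

section Curve

variable (v γ : σ → R) (f : MvPolynomial σ R)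

theorem curve_eq_X_mul :
    (fun i => Polynomial.C (v i) * Polynomial.X + Polynomial.C (γ i) * Polynomial.X ^ 2) =
      fun i => Polynomial.X * (Polynomial.C (v i) + Polynomial.C (γ i) * Polynomial.X) := by
  funext i; ring

theorem coeff_zero_aeval_curve :
    (aeval (fun i => Polynomial.C (v i) * Polynomial.X +
      Polynomial.C (γ i) * Polynomial.X ^ 2) f).coeff 0 = eval 0 f := by
  simp [curve_eq_X_mul, coeff_aeval_X_mul, homogeneousComponent_zero, eval_zero, constantCoeff_eq]

theorem coeff_one_aeval_curve :
    (aeval (fun i => Polynomial.C (v i) * Polynomial.X +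
      Polynomial.C (γ i) * Polynomial.X ^ 2) f).coeff 1 = eval v (homogeneousComponent 1 f) := by
  simp [curve_eq_X_mul, coeff_aeval_X_mul, Finset.sum_range_succ, homogeneousComponent_zero,
    coeff_zero_aeval]

theorem coeff_two_aeval_curve :
    (aeval (fun i => Polynomial.C (v i) * Polynomial.X +
      Polynomial.C (γ i) * Polynomial.X ^ 2) f).coeff 2 =
      eval γ (homogeneousComponent 1 f) + eval v (homogeneousComponent 2 f) := by
  simp [curve_eq_X_mul, coeff_aeval_X_mul, Finset.sum_range_succ, homogeneousComponent_zero,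
    coeff_zero_aeval, IsHomogeneous.coeff_aeval (homogeneousComponent_isHomogeneous 1 f)]

end Curve

section Field

variable {K : Type*} [Field K] (V : Submodule K (MvPolynomial σ K)) (v : σ → K)

theorem exists_forall_eval_homogeneousComponent_one_add_eq_zero
    (hquad : ∀ f ∈ V, homogeneousComponent 1 f = 0 → eval v (homogeneousComponent 2 f) = 0) :
    ∃ γ : σ → K, ∀ f ∈ V,
      eval γ (homogeneousComponent 1 f) + eval v (homogeneousComponent 2 f) = 0 := by
  obtain ⟨G, hG⟩ := LinearMap.exists_comp_eq_of_ker_le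
    ((homogeneousComponent 1).comp V.subtype)
    (-((aeval v).toLinearMap ∘ₗ homogeneousComponent 2 ∘ₗ V.subtype))
    (fun f hf => by simpa using hquad f f.2 hf)
  refine ⟨fun i => G (X i), fun f hf => ?_⟩
  have hGf := LinearMap.congr_fun hG ⟨f, hf⟩
  simp only [LinearMap.comp_apply, Submodule.subtype_apply, LinearMap.neg_apply,
    AlgHom.toLinearMap_apply] at hGf
  rw [← (homogeneousComponent_isHomogeneous 1 f).linearMap_apply_eq_eval G, hGf]
  exact neg_add_cancel _

theorem exists_eq_zero_or_linearIndependent_forall_eval_add_eq_zero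
    (hlin : ∀ f ∈ V, eval v (homogeneousComponent 1 f) = 0) {γ₀ : σ → K}
    (hγ₀ : ∀ f ∈ V, eval γ₀ (homogeneousComponent 1 f) + eval v (homogeneousComponent 2 f) = 0) :
    ∃ γ : σ → K, (γ = 0 ∨ LinearIndependent K ![v, γ]) ∧ ∀ f ∈ V,
      eval γ (homogeneousComponent 1 f) + eval v (homogeneousComponent 2 f) = 0 := by
  by_cases hind : LinearIndependent K ![v, γ₀]
  · exact ⟨γ₀, Or.inr hind, hγ₀⟩
  refine ⟨0, Or.inl rfl, fun f hf => ?_⟩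
  rw [(homogeneousComponent_isHomogeneous 1 f).eval_zero_eq_zero one_ne_zero, zero_add]
  rcases eq_or_ne v 0 with rfl | hv
  · exact (homogeneousComponent_isHomogeneous 2 f).eval_zero_eq_zero two_ne_zero
  obtain ⟨a, rfl⟩ : ∃ a : K, a • v = γ₀ := by simpa [LinearIndependent.pair_iff' hv] using hind
  simpa [(homogeneousComponent_isHomogeneous 1 f).eval_smul, hlin f hf] using hγ₀ f hf

end Field

end MvPolynomial

/-- Through a tangent-cone direction `v` one can draw a parameterized plane curve
`G(t) = t·v + t²·γ`, with `γ` zero or linearly independent of `v`, meeting the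
zero set of `I` with multiplicity at least `3` at the origin: for every `f ∈ I`
the power series (polynomial) `f(t·v + t²·γ)` has vanishing coefficients in
degrees `0`, `1` and `2`. -/
theorem exists_smooth_plane_curve_multiplicity_ge_three {K : Type*} [Field K]
    {n : ℕ} (I : Ideal (MvPolynomial (Fin n) K))
    (h0 : ∀ f ∈ I, eval (0 : Fin n → K) f = 0)
    (v : Fin n → K)
    (hlin : ∀ f ∈ I, eval v (homogeneousComponent 1 f) = 0)
    (hquad : ∀ f ∈ I, homogeneousComponent 1 f = 0 →
      eval v (homogeneousComponent 2 f) = 0) :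
    ∃ γ : Fin n → K, (γ = 0 ∨ LinearIndependent K ![v, γ]) ∧
      ∀ f ∈ I, ∀ k ≤ 2,
        (aeval (fun i => Polynomial.C (v i) * Polynomial.X +
          Polynomial.C (γ i) * Polynomial.X ^ 2) f).coeff k = 0 := by
  obtain ⟨γ₀, hγ₀⟩ :=
    exists_forall_eval_homogeneousComponent_one_add_eq_zero (I.restrictScalars K) v hquad
  obtain ⟨γ, hγ, hquad₀⟩ :=
    exists_eq_zero_or_linearIndependent_forall_eval_add_eq_zero (I.restrictScalars K) v hlin hγ₀
  refine ⟨γ, hγ, fun f hf k hk => ?_⟩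
  interval_cases k
  · rw [coeff_zero_aeval_curve, h0 f hf]
  · rw [coeff_one_aeval_curve, hlin f hf]
  · rw [coeff_two_aeval_curve, hquad₀ f hf]
end

section
/- Consider the cuspidal cubic $X = \{(x,y) \in K^2 : x^2 = y^3\}$ over a field $K$ of characteristic $0$ and $p = (0,0)$. There is no smooth parameterized curve $G(t) = tv + t^2\gamma + t^3\delta + \cdots$ with $v, \gamma, \delta \in K^2$ and $v \neq 0$ such that $G_1(t)^2 - G_2(t)^3$ vanishes to order $\geq 4$ at $t = 0$. -/
open PowerSeries

lemma coeff_two_sq {K : Type*} [Field K] (G : PowerSeries K) (h : constantCoeff G = 0) :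
    coeff 2 (G ^ 2) = (coeff 1 G) ^ 2 := by
  rw [pow_two, coeff_mul, Finset.Nat.sum_antidiagonal_eq_sum_range_succ_mk]
  simp [Finset.sum_range_succ, coeff_zero_eq_constantCoeff, h, sq]

lemma coeff_three_sq {K : Type*} [Field K] (G : PowerSeries K) (h : constantCoeff G = 0) :
    coeff 3 (G ^ 2) = 2 * coeff 1 G * coeff 2 G := by
  rw [pow_two, coeff_mul, Finset.Nat.sum_antidiagonal_eq_sum_range_succ_mk]
  simp [Finset.sum_range_succ, coeff_zero_eq_constantCoeff, h]
  ring

lemma coeff_two_cube {K : Type*} [Field K] (G : PowerSeries K) (h : constantCoeff G = 0) :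
    coeff 2 (G ^ 3) = 0 := by
  rw [show (3:ℕ) = 1+1+1 by norm_num, pow_succ, pow_succ, pow_one, coeff_mul,
    Finset.Nat.sum_antidiagonal_eq_sum_range_succ_mk]
  simp [Finset.sum_range_succ, coeff_mul, Finset.Nat.sum_antidiagonal_eq_sum_range_succ_mk,
    coeff_zero_eq_constantCoeff, h]

lemma coeff_three_cube {K : Type*} [Field K] (G : PowerSeries K) (h : constantCoeff G = 0) :
    coeff 3 (G ^ 3) = (coeff 1 G) ^ 3 := by
  rw [show (3:ℕ) = 1+1+1 by norm_num, pow_succ, pow_succ, pow_one, coeff_mul,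
    Finset.Nat.sum_antidiagonal_eq_sum_range_succ_mk]
  simp [Finset.sum_range_succ, coeff_mul, Finset.Nat.sum_antidiagonal_eq_sum_range_succ_mk,
    coeff_zero_eq_constantCoeff, h]
  ring

/-- For the cuspidal cubic `x² = y³` there is no smooth parameterized curve
`G(t) = t·v + t²·γ + t³·δ + ⋯` (i.e. a pair of power series vanishing at `0`
with nonzero linear term `v`) such that `G₁(t)² - G₂(t)³` vanishes to order
`≥ 4` at `t = 0`: some coefficient of degree `≤ 3` is nonzero. -/
theorem cuspidal_cubic_no_order_four_contact {K : Type*} [Field K] [CharZero K]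
    (G₁ G₂ : PowerSeries K)
    (h₁ : constantCoeff G₁ = 0) (h₂ : constantCoeff G₂ = 0)
    (hv : coeff 1 G₁ ≠ 0 ∨ coeff 1 G₂ ≠ 0) :
    ¬ ∀ k ≤ 3, coeff k (G₁ ^ 2 - G₂ ^ 3) = 0 := by
  intro h
  have ha := h 2 (by norm_num)
  have hb := h 3 (by norm_num)
  rw [map_sub, coeff_two_sq G₁ h₁, coeff_two_cube G₂ h₂, sub_zero] at ha
  have ha1 : coeff 1 G₁ = 0 := by
    exact pow_eq_zero_iff (n := 2) (by norm_num) |>.mp ha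
  rw [map_sub, coeff_three_sq G₁ h₁, coeff_three_cube G₂ h₂, ha1] at hb
  have hb1 : coeff 1 G₂ = 0 := by
    have : (coeff 1 G₂) ^ 3 = 0 := by linear_combination -hb
    exact pow_eq_zero_iff (n := 3) (by norm_num) |>.mp this
  tauto
end

section
/- Let $N$ be a commutative associative algebra with $N^3 = 0$ over a field $K$ with $\mathrm{char}\, K \neq 2$, and let $f \in L(N/N^2, K)$ be a linear functional, viewed as $f: N \to K$ vanishing on $N^2$. Define $x \circ y = f(y)x + f(x)y$. Then $\circ$ is symmetric bilinear and satisfies the cocycle condition $x(y\circ z) - (xy)\circ z + x\circ(yz) - (x\circ y)z = 0$ for all $x,y,z \in N$. -/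
namespace LinearMap

variable {K N : Type*} [CommSemiring K] [NonUnitalNonAssocRing N] [Module K N]

def symmSMul (f : N →ₗ[K] K) (x y : N) : N := f y • x + f x • y

variable (f : N →ₗ[K] K)

theorem symmSMul_comm (x y : N) : symmSMul f x y = symmSMul f y x :=
  add_comm _ _

theorem symmSMul_add_left (x x' y : N) :
    symmSMul f (x + x') y = symmSMul f x y + symmSMul f x' y := by
  simp only [symmSMul, map_add, smul_add, add_smul]
  abel

theorem symmSMul_smul_left (a : K) (x y : N) :
    symmSMul f (a • x) y = a • symmSMul f x y := by
  simp only [symmSMul, map_smul, smul_eq_mul, smul_add, smul_comm a, mul_smul]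

/-- Once `f (x * y) = 0` kills `(x * y) ∘ z` and `x ∘ (y * z)` down to one term each, the
remaining six terms cancel in pairs. -/
theorem symmSMul_cocycle [SMulCommClass K N N] [IsScalarTower K N N]
    (hf : ∀ x y : N, f (x * y) = 0) (x y z : N) :
    x * symmSMul f y z - symmSMul f (x * y) z + symmSMul f x (y * z)
      - symmSMul f x y * z = 0 := by
  simp only [symmSMul, hf, zero_smul, add_zero, mul_add, add_mul, mul_smul_comm,
    smul_mul_assoc]
  abel

end LinearMap

theorem functional_cocycle_general {K N : Type*} [Field K]
    [NonUnitalCommRing N] [Module K N] [SMulCommClass K N N] [IsScalarTower K N N]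
    (f : N →ₗ[K] K)
    (hf : ∀ x y : N, f (x * y) = 0)
    (circ : N → N → N)
    (hcirc : ∀ x y : N, circ x y = f y • x + f x • y) :
    (∀ x y : N, circ x y = circ y x) ∧
    (∀ x x' y : N, circ (x + x') y = circ x y + circ x' y) ∧
    (∀ (a : K) (x y : N), circ (a • x) y = a • circ x y) ∧
    (∀ x y z : N,
      x * circ y z - circ (x * y) z + circ x (y * z) - circ x y * z = 0) := by
  obtain rfl : circ = LinearMap.symmSMul f := funext₂ hcirc
  exact ⟨f.symmSMul_comm, f.symmSMul_add_left, f.symmSMul_smul_left, f.symmSMul_cocycle hf⟩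

/-- For a linear functional `f` on `N` vanishing on `N²`, the map
`x ∘ y = f(y)x + f(x)y` is a symmetric bilinear 2-cocycle:
`x(y∘z) - (xy)∘z + x∘(yz) - (x∘y)z = 0`. -/
theorem functional_cocycle {K N : Type*} [Field K]
    [NonUnitalCommRing N] [Module K N] [SMulCommClass K N N] [IsScalarTower K N N]
    (h2K : (2 : K) ≠ 0)
    (hN3 : ∀ x y z : N, x * y * z = 0)
    (f : N →ₗ[K] K)
    (hf : ∀ x y : N, f (x * y) = 0)
    (circ : N → N → N)
    (hcirc : ∀ x y : N, circ x y = f y • x + f x • y) :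
    (∀ x y : N, circ x y = circ y x) ∧
    (∀ x x' y : N, circ (x + x') y = circ x y + circ x' y) ∧
    (∀ (a : K) (x y : N), circ (a • x) y = a • circ x y) ∧
    (∀ x y z : N,
      x * circ y z - circ (x * y) z + circ x (y * z) - circ x y * z = 0) :=
  functional_cocycle_general f hf circ hcirc
end
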